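/- Let q ≥ 2, δ ≥ 1, and define β_δ(n) = Σ_{l≥0} ε_l(n)·ε_{l+δ}(n), where ε_l(n) are the base-q digits of n. Then β_δ is (δ+1)-recursive: for all n ≥ 1 and all (x_δ, x_{δ-1}, ..., x_0) ∈ {0,...,q-1}^{δ+1}, β_δ(q^{δ+1} n + Σ_{j=0}^{δ} x_j q^j) = β_δ(q^δ n + Σ_{j=1}^{δ} x_j q^{j-1}) + x_δ·x_0. -/

import Mathlib

/-!
Appending a digit `r` to `m` shifts every digit of `m` up by one place, so the pairs of digits at
distance `δ` in `q * m + r` are those of `m` together with the one new pair formed by `r` and the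
digit `δ` places above it. Applied to `N = q ^ (δ + 1) * n + ∑ x j * q ^ j = q * M + x 0`, that
digit is `x δ`.
-/

/-- The `l`-th digit of `n` in base `q`. -/
def digit (q l n : ℕ) : ℕ := n / q ^ l % q

open Finset

/-- The generalized Rudin–Shapiro sequence `β_δ`. -/
def rudinShapiro (q δ m : ℕ) : ℕ := ∑ l ∈ range (m + 1), digit q l m * digit q (l + δ) m

lemma digit_eq_zero_of_lt_pow {q l m : ℕ} (h : m < q ^ l) : digit q l m = 0 := by
  simp [digit, Nat.div_eq_of_lt h]

lemma digit_zero_mul_add {q m r : ℕ} (hr : r < q) : digit q 0 (q * m + r) = r := by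
  simp [digit, Nat.mod_eq_of_lt hr]

lemma digit_succ_mul_add {q m r : ℕ} (hr : r < q) (l : ℕ) :
    digit q (l + 1) (q * m + r) = digit q l m := by
  have hq : 0 < q := by omega
  rw [digit, pow_succ', ← Nat.div_div_eq_div_mul, Nat.mul_add_div hq, Nat.div_eq_of_lt hr,
    add_zero, digit]

lemma sum_fin_succ_mul_pow (q : ℕ) {k : ℕ} (x : Fin (k + 1) → ℕ) :
    ∑ j : Fin (k + 1), x j * q ^ (j : ℕ) = q * ∑ j : Fin k, x j.succ * q ^ (j : ℕ) + x 0 := by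
  rw [Fin.sum_univ_succ, mul_sum]
  simp only [Fin.val_zero, Fin.val_succ, pow_succ]
  ring_nf

lemma pow_mul_add_sum_fin_succ (q n : ℕ) {k : ℕ} (x : Fin (k + 1) → ℕ) :
    q ^ (k + 1) * n + ∑ j : Fin (k + 1), x j * q ^ (j : ℕ)
      = q * (q ^ k * n + ∑ j : Fin k, x j.succ * q ^ (j : ℕ)) + x 0 := by
  rw [sum_fin_succ_mul_pow]
  ring

lemma digit_pow_mul_add_sum {q : ℕ} (n : ℕ) :
    ∀ {k : ℕ} (x : Fin k → ℕ), (∀ j, x j < q) → ∀ i : Fin k,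
      digit q i (q ^ k * n + ∑ j : Fin k, x j * q ^ (j : ℕ)) = x i
  | 0, _, _, i => i.elim0
  | k + 1, x, hx, i => by
    rw [pow_mul_add_sum_fin_succ]
    refine Fin.cases ?_ (fun i => ?_) i
    · exact digit_zero_mul_add (hx 0)
    · rw [Fin.val_succ, digit_succ_mul_add (hx 0)]
      exact digit_pow_mul_add_sum n (fun j => x j.succ) (fun j => hx _) i

lemma rudinShapiro_eq_sum_range {q δ m K : ℕ} (hq : 2 ≤ q) (hK : m < q ^ K) :
    rudinShapiro q δ m = ∑ l ∈ range K, digit q l m * digit q (l + δ) m := by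
  have extend : ∀ {K : ℕ}, m < q ^ K → ∀ {K'}, K ≤ K' →
      ∑ l ∈ range K', digit q l m * digit q (l + δ) m
        = ∑ l ∈ range K, digit q l m * digit q (l + δ) m := by
    intro K hK K' hKK'
    refine (sum_subset (range_subset_range.2 hKK') fun l _ hl => ?_).symm
    have hlK : K ≤ l := by simpa using hl
    rw [digit_eq_zero_of_lt_pow (hK.trans_le (Nat.pow_le_pow_right (by omega) hlK)), zero_mul]
  have hm : m < q ^ (m + 1) := (Nat.lt_pow_self hq).trans' m.lt_succ_self
  rw [rudinShapiro, ← extend hm (Nat.le_add_right (m + 1) K), extend hK (Nat.le_add_left K (m + 1))]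

lemma rudinShapiro_mul_add {q δ m r : ℕ} (hq : 2 ≤ q) (hr : r < q) :
    rudinShapiro q δ (q * m + r) = rudinShapiro q δ m + r * digit q δ (q * m + r) := by
  have hm : m < q ^ (q * m + r) :=
    (Nat.lt_pow_self hq).trans_le (Nat.pow_le_pow_right (by omega) (by nlinarith))
  rw [rudinShapiro, sum_range_succ', rudinShapiro_eq_sum_range hq hm, digit_zero_mul_add hr,
    zero_add]
  congr 1
  refine sum_congr rfl fun l _ => ?_
  rw [digit_succ_mul_add hr, Nat.add_right_comm, digit_succ_mul_add hr]

theorem stmt_16_general (q δ : ℕ) (hq : 2 ≤ q)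
    (b : ℕ → ℕ)
    (hb : ∀ m, b m = ∑ l ∈ Finset.range (m + 1), digit q l m * digit q (l + δ) m) :
    ∀ n : ℕ, 1 ≤ n → ∀ x : Fin (δ + 1) → ℕ, (∀ j, x j < q) →
      b (q ^ (δ + 1) * n + ∑ j : Fin (δ + 1), x j * q ^ (j : ℕ)) =
        b (q ^ δ * n + ∑ j : Fin δ, x j.succ * q ^ (j : ℕ)) + x (Fin.last δ) * x 0 := by
  intro n _ x hx
  obtain rfl : b = rudinShapiro q δ := funext hb
  have htop : digit q δ (q ^ (δ + 1) * n + ∑ j : Fin (δ + 1), x j * q ^ (j : ℕ))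
      = x (Fin.last δ) :=
    digit_pow_mul_add_sum n x hx (Fin.last δ)
  rw [pow_mul_add_sum_fin_succ] at htop ⊢
  rw [rudinShapiro_mul_add hq (hx 0), htop, mul_comm (x 0)]

theorem stmt_16 (q δ : ℕ) (hq : 2 ≤ q) (hδ : 1 ≤ δ)
    (b : ℕ → ℕ)
    (hb : ∀ m, b m = ∑ l ∈ Finset.range (m + 1), digit q l m * digit q (l + δ) m) :
    ∀ n : ℕ, 1 ≤ n → ∀ x : Fin (δ + 1) → ℕ, (∀ j, x j < q) →
      b (q ^ (δ + 1) * n + ∑ j : Fin (δ + 1), x j * q ^ (j : ℕ)) =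
        b (q ^ δ * n + ∑ j : Fin δ, x j.succ * q ^ (j : ℕ)) + x (Fin.last δ) * x 0 :=
  stmt_16_general q δ hq b hb
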